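/- Let k be a field and consider the polynomial ring R = k[x_1, …, x_m, y_1, …, y_n] with q ≥ 1. Let I be the ideal generated by x_1^q, …, x_m^q, y_1^q, …, y_n^q. If f is a polynomial only in the variables x_1, …, x_m and g is a polynomial only in the variables y_1, …, y_n, and f·g ∈ I, then f ∈ (x_1^q, …, x_m^q) or g ∈ (y_1^q, …, y_n^q). -/
import Mathlib


open MvPolynomial

lemma mem_span_X_pow_iff {R σ : Type*} [CommSemiring R] {q : ℕ} {p : MvPolynomial σ R} :
    p ∈ Ideal.span (Set.range fun v : σ => (X v : MvPolynomial σ R) ^ q) ↔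
      ∀ d ∈ p.support, ∃ v, q ≤ d v := by
  have h : (Set.range fun v : σ => (X v : MvPolynomial σ R) ^ q) =
      (fun s => monomial s (1 : R)) '' Set.range (fun v : σ => Finsupp.single v q) := by
    rw [Set.image_eq_range]
    ext v
    simp [X_pow_eq_monomial]
  rw [h, mem_ideal_span_monomial_image]
  simp [Finsupp.single_le_iff]

/-- Let `R = k[x_1, …, x_m, y_1, …, y_n]` and `I` the ideal generated by the `q`-th powers
of all the variables.  If `f` only involves the `x`-variables, `g` only involves the
`y`-variables, and `f·g ∈ I`, then `f ∈ (x_1^q, …, x_m^q)` or `g ∈ (y_1^q, …, y_n^q)`. -/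
theorem disjoint_variables_prime_like
    (k : Type*) [Field k] (m n q : ℕ) (hq : 1 ≤ q)
    (f : MvPolynomial (Fin m) k) (g : MvPolynomial (Fin n) k)
    (hfg : (rename Sum.inl f) * (rename Sum.inr g) ∈
      Ideal.span (Set.range fun v : Fin m ⊕ Fin n =>
        (X v : MvPolynomial (Fin m ⊕ Fin n) k) ^ q)) :
    f ∈ Ideal.span (Set.range fun i : Fin m => (X i : MvPolynomial (Fin m) k) ^ q) ∨
      g ∈ Ideal.span (Set.range fun j : Fin n => (X j : MvPolynomial (Fin n) k) ^ q) := by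
  by_contra hc
  push_neg at hc
  obtain ⟨hf, hg⟩ := hc
  -- J : ideal of y^q, A : quotient
  set J : Ideal (MvPolynomial (Fin n) k) :=
    Ideal.span (Set.range fun j : Fin n => (X j : MvPolynomial (Fin n) k) ^ q) with hJ
  let A := MvPolynomial (Fin n) k ⧸ J
  let π : MvPolynomial (Fin n) k →+* A := Ideal.Quotient.mk J
  let φ : MvPolynomial (Fin m ⊕ Fin n) k →+* MvPolynomial (Fin m) A :=
    (MvPolynomial.map π).comp (sumToIter k (Fin m) (Fin n))
  -- compute φ on the two factors
  have hφf : φ (rename Sum.inl f) = MvPolynomial.map (π.comp (C : k →+* MvPolynomial (Fin n) k)) f := by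
    have : (sumToIter k (Fin m) (Fin n)).comp ((rename Sum.inl).toRingHom)
        = MvPolynomial.map (C : k →+* MvPolynomial (Fin n) k) := by
      apply MvPolynomial.ringHom_ext <;> intro a <;>
        simp [sumToIter_C, sumToIter_Xl]
    have h1 : sumToIter k (Fin m) (Fin n) (rename Sum.inl f)
        = MvPolynomial.map (C : k →+* MvPolynomial (Fin n) k) f := by
      have := congrArg (fun h => h f) (congrArg DFunLike.coe this)
      simpa using this
    simp only [φ, RingHom.comp_apply, h1, map_map]
  have hφg : φ (rename Sum.inr g) = C (π g) := by
    have : (sumToIter k (Fin m) (Fin n)).comp ((rename Sum.inr).toRingHom)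
        = (C : MvPolynomial (Fin n) k →+* MvPolynomial (Fin m) (MvPolynomial (Fin n) k)) := by
      apply MvPolynomial.ringHom_ext <;> intro a <;>
        simp [sumToIter_C, sumToIter_Xr]
    have h1 : sumToIter k (Fin m) (Fin n) (rename Sum.inr g) = C g := by
      have := congrArg (fun h => h g) (congrArg DFunLike.coe this)
      simpa using this
    simp only [φ, RingHom.comp_apply, h1, map_C]
  -- push hfg through φ
  have hmem : φ ((rename Sum.inl f) * (rename Sum.inr g)) ∈
      Ideal.span (Set.range fun i : Fin m => (X i : MvPolynomial (Fin m) A) ^ q) := by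
    have h2 := Ideal.mem_map_of_mem φ hfg
    rw [Ideal.map_span] at h2
    refine Ideal.span_le.mpr ?_ h2
    rintro _ ⟨_, ⟨v, rfl⟩, rfl⟩
    rcases v with i | j
    · have : φ (X (Sum.inl i) ^ q) = (X i : MvPolynomial (Fin m) A) ^ q := by
        simp [φ, sumToIter_Xl]
      rw [this]
      exact Ideal.subset_span ⟨i, rfl⟩
    · have : φ (X (Sum.inr j) ^ q) = 0 := by
        have hXq : π ((X j : MvPolynomial (Fin n) k) ^ q) = 0 := by
          rw [Ideal.Quotient.eq_zero_iff_mem]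
          exact Ideal.subset_span ⟨j, rfl⟩
        have hX : φ (X (Sum.inr j)) = C (π (X j)) := by simp [φ, sumToIter_Xr]
        rw [map_pow, hX, ← map_pow, ← map_pow, hXq, map_zero]
      rw [this]
      exact Ideal.zero_mem _
  rw [map_mul, hφf, hφg, mem_span_X_pow_iff] at hmem
  -- pick a bad monomial of f
  rw [mem_span_X_pow_iff] at hf
  push_neg at hf
  obtain ⟨d, hd, hdlt⟩ := hf
  -- coefficient of d in the product is nonzero
  have hgne : π g ≠ 0 := by
    rw [Ne, Ideal.Quotient.eq_zero_iff_mem]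
    exact hg
  have hcoeff : coeff d (MvPolynomial.map (π.comp (C : k →+* MvPolynomial (Fin n) k)) f * C (π g)) ≠ 0 := by
    rw [mul_comm, coeff_C_mul, coeff_map]
    have hc0 : coeff d f ≠ 0 := mem_support_iff.mp hd
    intro h0
    apply hgne
    have : π (C (coeff d f) * g) = 0 := by
      rw [map_mul, mul_comm]
      simp only [RingHom.comp_apply] at h0
      exact h0
    rw [Ideal.Quotient.eq_zero_iff_mem] at this ⊢
    have := Ideal.mul_mem_left J (C (coeff d f)⁻¹) this
    rwa [← mul_assoc, ← map_mul, inv_mul_cancel₀ hc0, map_one, one_mul] at this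
  obtain ⟨v, hv⟩ := hmem d (mem_support_iff.mpr hcoeff)
  exact absurd hv (not_le.mpr (hdlt v))
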